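/- Let 0 < α < 1, T > 0, N a positive integer, and r ≥ 1, and let p^{(n)}_{n−i} be the coefficients built from the L1 weights on the graded mesh t_n = T(n/N)^r. Then for every n = 1, 2, ..., N one has Σ_{s=1}^{n} p^{(n)}_{n−s} · t_s^{−α}/Γ(1−α) ≤ 1. -/

import Mathlib

/-!
The coefficients `p^{(n)}` invert the L1 kernel: `Σ_{k=i}^{n} p^{(n)}_{n−k} b^{(k)}_{k−i} = 1` for
`1 ≤ i ≤ n`, the recursion defining `p^{(n)}_{n−i}` being exactly this identity at `i` minus the one
at `i + 1`. Every `b^{(k)}_{k−i}` is a secant slope of the concave function `x ↦ x^{1−α}` divided by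
`Γ(2−α)`. Comparing adjacent slopes shows `b^{(k)}_{k−i}` increases with `i`, so all `p^{(n)}` are
nonnegative; comparing the slope on `[t_s − t_1, t_s]` with the derivative at `t_s` gives
`t_s^{−α}/Γ(1−α) ≤ b^{(s)}_{s−1}`. The sum is therefore at most the identity at `i = 1`.
-/

noncomputable section

/-- The graded mesh `t_n = T (n/N)^r` on `[0,T]`. -/
def gmesh (T r : ℝ) (N n : ℕ) : ℝ := T * ((n : ℝ) / (N : ℝ)) ^ r

/-- The step sizes `τ_n = t_n - t_{n-1}` of the graded mesh. -/
def gstep (T r : ℝ) (N n : ℕ) : ℝ := gmesh T r N n - gmesh T r N (n - 1)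

/-- The L1 weights
`d_{n,k} = ((t_n − t_{n−k})^{1−α} − (t_n − t_{n−k+1})^{1−α})/τ_{n−k+1}`. -/
def L1w (α T r : ℝ) (N n k : ℕ) : ℝ :=
  ((gmesh T r N n - gmesh T r N (n - k)) ^ (1 - α)
      - (gmesh T r N n - gmesh T r N (n - k + 1)) ^ (1 - α)) / gstep T r N (n - k + 1)

/-- The coefficients `b^{(n)}_{n−i} = d_{n,n−i+1}/Γ(2−α)`; here `bcoef α T r N n i`
denotes `b^{(n)}_{n-i}`. -/
def bcoef (α T r : ℝ) (N n i : ℕ) : ℝ := L1w α T r N n (n - i + 1) / Real.Gamma (2 - α)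

/-- Auxiliary definition: `pcoefAux α T r N n m` is the coefficient `p^{(n)}_m`,
defined by `p^{(n)}_0 = Γ(2−α) τ_n^α` and, for `m = n - i` with `1 ≤ i ≤ n−1`,
`p^{(n)}_{n−i} = Γ(2−α) τ_i^α Σ_{k=i+1}^{n} (b^{(k)}_{k−i−1} − b^{(k)}_{k−i}) p^{(n)}_{n−k}`
(the sum over `k ∈ [i+1, n]` is re-indexed by `j = n - k ∈ [0, n-i-1]`). -/
def pcoefAux (α T r : ℝ) (N n : ℕ) : ℕ → ℝ
  | 0 => Real.Gamma (2 - α) * (gstep T r N n) ^ α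
  | (m + 1) =>
      Real.Gamma (2 - α) * (gstep T r N (n - (m + 1))) ^ α *
        ∑ j ∈ (Finset.range (m + 1)).attach,
          (bcoef α T r N (n - j.1) (n - m) - bcoef α T r N (n - j.1) (n - (m + 1))) *
            pcoefAux α T r N n j.1
  decreasing_by
    have := j.2
    simp only [Finset.mem_range] at this
    omega

/-- `pcoef α T r N n i` is the coefficient `p^{(n)}_{n−i}` for `1 ≤ i ≤ n`. -/
def pcoef (α T r : ℝ) (N n i : ℕ) : ℝ := pcoefAux α T r N n (n - i)

open Finset Real

variable {α T r : ℝ} {N : ℕ}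

lemma gmesh_zero (hr : r ≠ 0) : gmesh T r N 0 = 0 := by
  simp [gmesh, Real.zero_rpow hr]

lemma gmesh_strictMono (hT : 0 < T) (hr : 0 < r) (hN : 0 < N) : StrictMono (gmesh T r N) := by
  intro j k hjk
  have hN' : (0 : ℝ) < N := by exact_mod_cast hN
  unfold gmesh
  gcongr

lemma gstep_pos (ht : StrictMono (gmesh T r N)) {k : ℕ} (hk : 1 ≤ k) : 0 < gstep T r N k :=
  sub_pos.mpr (ht (by omega))

lemma bcoef_eq_slope {k i : ℕ} (hi : 1 ≤ i) (hik : i ≤ k) :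
    bcoef α T r N k i =
      slope (fun x : ℝ ↦ x ^ (1 - α)) (gmesh T r N k - gmesh T r N i)
        (gmesh T r N k - gmesh T r N (i - 1)) / Gamma (2 - α) := by
  rw [bcoef, L1w, slope_def_field, show k - (k - i + 1) = i - 1 by omega,
    show i - 1 + 1 = i by omega, gstep]
  congr 2
  ring

lemma bcoef_le_bcoef_succ (ht : StrictMono (gmesh T r N)) (hα0 : 0 ≤ α) (hα1 : α ≤ 1)
    {k i : ℕ} (hi : 1 ≤ i) (hik : i < k) :
    bcoef α T r N k i ≤ bcoef α T r N k (i + 1) := by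
  rw [bcoef_eq_slope hi hik.le, bcoef_eq_slope (by omega) hik, Nat.succ_sub_one,
    slope_def_field, slope_def_field]
  refine div_le_div_of_nonneg_right ?_ (Gamma_pos_of_pos (by linarith)).le
  refine (concaveOn_rpow (by linarith) (by linarith)).slope_anti_adjacent ?_ ?_ ?_ ?_
  · exact Set.mem_Ici.mpr (sub_nonneg.mpr (ht.monotone hik))
  · exact Set.mem_Ici.mpr (sub_nonneg.mpr (ht.monotone (by omega)))
  · exact sub_lt_sub_left (ht (by omega)) _
  · exact sub_lt_sub_left (ht (by omega)) _

lemma Gamma_mul_rpow_mul_bcoef_self (ht : StrictMono (gmesh T r N)) (hα : α < 1) {k : ℕ}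
    (hk : 1 ≤ k) : Gamma (2 - α) * gstep T r N k ^ α * bcoef α T r N k k = 1 := by
  have hτ := gstep_pos ht hk
  have hΓ : Gamma (2 - α) ≠ 0 := (Gamma_pos_of_pos (by linarith)).ne'
  rw [bcoef_eq_slope hk le_rfl, slope_def_field, sub_self, ← gstep, sub_zero,
    zero_rpow (by linarith), sub_zero]
  field_simp
  rw [← rpow_add hτ, add_sub_cancel, rpow_one]

lemma rpow_neg_div_Gamma_le_bcoef_one (ht : StrictMono (gmesh T r N))
    (h0 : gmesh T r N 0 = 0) (hα0 : 0 ≤ α) (hα1 : α < 1) {s : ℕ} (hs : 1 ≤ s) :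
    gmesh T r N s ^ (-α) / Gamma (1 - α) ≤ bcoef α T r N s 1 := by
  have hts : 0 < gmesh T r N s := h0 ▸ ht (by omega)
  have hΓ : Gamma (2 - α) = (1 - α) * Gamma (1 - α) := by
    rw [show 2 - α = 1 - α + 1 by ring, Gamma_add_one (by linarith)]
  have hderiv : (1 - α) * gmesh T r N s ^ (-α) ≤
      slope (fun x : ℝ ↦ x ^ (1 - α)) (gmesh T r N s - gmesh T r N 1) (gmesh T r N s) := by
    refine (concaveOn_rpow (by linarith) (by linarith)).le_slope_of_hasDerivAt ?_ ?_ ?_ ?_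
    · exact Set.mem_Ici.mpr (sub_nonneg.mpr (ht.monotone hs))
    · exact Set.mem_Ici.mpr hts.le
    · exact sub_lt_self _ (h0 ▸ ht zero_lt_one)
    · simpa using hasDerivAt_rpow_const (p := 1 - α) (Or.inl hts.ne')
  rw [bcoef_eq_slope le_rfl hs, Nat.sub_self, h0, sub_zero, hΓ,
    le_div_iff₀ (mul_pos (by linarith) (Gamma_pos_of_pos (by linarith)))]
  calc gmesh T r N s ^ (-α) / Gamma (1 - α) * ((1 - α) * Gamma (1 - α))
      = (1 - α) * gmesh T r N s ^ (-α) := by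
        field_simp [(Gamma_pos_of_pos (by linarith : 0 < 1 - α)).ne']
    _ ≤ _ := hderiv

lemma pcoefAux_succ (n m : ℕ) :
    pcoefAux α T r N n (m + 1) =
      Gamma (2 - α) * gstep T r N (n - (m + 1)) ^ α *
        ∑ j ∈ range (m + 1),
          (bcoef α T r N (n - j) (n - m) - bcoef α T r N (n - j) (n - (m + 1))) *
            pcoefAux α T r N n j := by
  rw [pcoefAux, sum_attach (range (m + 1)) fun j ↦
    (bcoef α T r N (n - j) (n - m) - bcoef α T r N (n - j) (n - (m + 1))) * pcoefAux α T r N n j]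

lemma pcoefAux_sub_eq {n i : ℕ} (hin : i < n) :
    pcoefAux α T r N n (n - i) =
      Gamma (2 - α) * gstep T r N i ^ α *
        ∑ k ∈ Ioc i n, (bcoef α T r N k (i + 1) - bcoef α T r N k i) * pcoefAux α T r N n (n - k) := by
  obtain ⟨m, hm⟩ : ∃ m, n - i = m + 1 := ⟨n - i - 1, by omega⟩
  rw [hm, pcoefAux_succ, show n - (m + 1) = i by omega, show n - m = i + 1 by omega]
  congr 1
  refine sum_nbij' (fun j ↦ n - j) (fun k ↦ n - k) ?_ ?_ ?_ ?_ ?_ <;>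
    simp only [mem_range, mem_Ioc]
  · intro j hj; omega
  · intro k hk; omega
  · intro j hj; omega
  · intro k hk; omega
  · intro j hj
    rw [Nat.sub_sub_self (by omega : j ≤ n)]

lemma pcoefAux_nonneg (ht : StrictMono (gmesh T r N)) (hα0 : 0 ≤ α) (hα1 : α < 1) {n m : ℕ}
    (hm : m < n) : 0 ≤ pcoefAux α T r N n m := by
  induction m using Nat.strong_induction_on with
  | _ m ih =>
    have hΓ : 0 ≤ Gamma (2 - α) := (Gamma_pos_of_pos (by linarith)).le
    rcases Nat.eq_zero_or_pos m with rfl | hm0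
    · rw [pcoefAux]
      exact mul_nonneg hΓ (rpow_nonneg (gstep_pos ht (by omega)).le α)
    rw [show m = n - (n - m) by omega, pcoefAux_sub_eq (by omega)]
    refine mul_nonneg (mul_nonneg hΓ (rpow_nonneg (gstep_pos ht (by omega)).le α))
      (sum_nonneg fun k hk ↦ ?_)
    rw [mem_Ioc] at hk
    exact mul_nonneg (sub_nonneg.mpr (bcoef_le_bcoef_succ ht hα0 hα1.le (by omega) (by omega)))
      (ih _ (by omega) (by omega))

lemma sum_pcoefAux_mul_bcoef (ht : StrictMono (gmesh T r N)) (hα : α < 1) {n i : ℕ}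
    (hi : 1 ≤ i) (hin : i ≤ n) :
    ∑ k ∈ Icc i n, pcoefAux α T r N n (n - k) * bcoef α T r N k i = 1 := by
  induction hin using Nat.decreasingInduction with
  | self =>
    rw [Icc_self, sum_singleton, Nat.sub_self, pcoefAux]
    exact Gamma_mul_rpow_mul_bcoef_self ht hα hi
  | of_succ i hin ih =>
    have hdiag : pcoefAux α T r N n (n - i) * bcoef α T r N i i =
        ∑ k ∈ Ioc i n, (bcoef α T r N k (i + 1) - bcoef α T r N k i) *
          pcoefAux α T r N n (n - k) := by
      rw [pcoefAux_sub_eq hin, mul_right_comm, Gamma_mul_rpow_mul_bcoef_self ht hα hi, one_mul]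
    calc ∑ k ∈ Icc i n, pcoefAux α T r N n (n - k) * bcoef α T r N k i
        = pcoefAux α T r N n (n - i) * bcoef α T r N i i +
            ∑ k ∈ Ioc i n, pcoefAux α T r N n (n - k) * bcoef α T r N k i := by
          rw [← Ioc_insert_left hin.le, sum_insert left_notMem_Ioc]
      _ = ∑ k ∈ Icc (i + 1) n, pcoefAux α T r N n (n - k) * bcoef α T r N k (i + 1) := by
          rw [hdiag, Icc_add_one_left_eq_Ioc, ← sum_add_distrib]
          exact sum_congr rfl fun k _ ↦ by ring
      _ = 1 := ih (by omega)

theorem pcoef_time_weighted_sum_le_one_general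
    (α T r : ℝ) (N : ℕ) (hα0 : 0 < α) (hα1 : α < 1) (hT : 0 < T) (hr : 1 ≤ r) (hN : 0 < N)
    (n : ℕ) (hn1 : 1 ≤ n) :
    ∑ s ∈ Finset.Icc 1 n,
        pcoef α T r N n s * ((gmesh T r N s) ^ (-α) / Real.Gamma (1 - α)) ≤ 1 := by
  have ht := gmesh_strictMono hT (by linarith) hN
  calc ∑ s ∈ Icc 1 n, pcoef α T r N n s * (gmesh T r N s ^ (-α) / Gamma (1 - α))
      ≤ ∑ s ∈ Icc 1 n, pcoefAux α T r N n (n - s) * bcoef α T r N s 1 := by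
        refine sum_le_sum fun s hs ↦ ?_
        rw [mem_Icc] at hs
        exact mul_le_mul_of_nonneg_left
          (rpow_neg_div_Gamma_le_bcoef_one ht (gmesh_zero (by linarith)) hα0.le hα1 hs.1)
          (pcoefAux_nonneg ht hα0.le hα1 (by omega))
    _ = 1 := sum_pcoefAux_mul_bcoef ht hα1 le_rfl hn1

/-- `Σ_{s=1}^{n} p^{(n)}_{n−s} · t_s^{−α}/Γ(1−α) ≤ 1` for `n = 1, …, N`. -/
theorem pcoef_time_weighted_sum_le_one
    (α T r : ℝ) (N : ℕ) (hα0 : 0 < α) (hα1 : α < 1) (hT : 0 < T) (hr : 1 ≤ r) (hN : 0 < N)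
    (n : ℕ) (hn1 : 1 ≤ n) (hnN : n ≤ N) :
    ∑ s ∈ Finset.Icc 1 n,
        pcoef α T r N n s * ((gmesh T r N s) ^ (-α) / Real.Gamma (1 - α)) ≤ 1 :=
  pcoef_time_weighted_sum_le_one_general α T r N hα0 hα1 hT hr hN n hn1
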